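/- For every integer n ≥ 3 and every integer t with 0 ≤ t ≤ 2^{n−3}, θ(n, 2^{n−1}, t) = 2·θ(n−2, t) + 2^{n−1}. In particular, θ(n, 2^{n−1}, 2^{n−3}) = (3/4)·2^n. -/

import Mathlib

open Finset

/-- Two vertices of the hypercube `Q_n` are adjacent iff they differ in exactly one
coordinate. -/
def cubeEdge {n : ℕ} (u v : Fin n → Bool) : Prop :=
  (Finset.univ.filter (fun i => u i ≠ v i)).card = 1

instance {n : ℕ} (u v : Fin n → Bool) : Decidable (cubeEdge u v) := by
  unfold cubeEdge; infer_instance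

/-- `θ(n,S)`: the number of edges of `Q_n` with exactly one endpoint in `S`. -/
def edgeBoundary (n : ℕ) (S : Finset (Fin n → Bool)) : ℕ :=
  (Finset.univ.filter (fun p : (Fin n → Bool) × (Fin n → Bool) =>
    p.1 ∈ S ∧ p.2 ∉ S ∧ cubeEdge p.1 p.2)).card

/-- `θ(n,k) = min {θ(n,S) : S ⊆ V(Q_n), |S| = k}`. -/
noncomputable def thetaMin (n k : ℕ) : ℕ :=
  sInf {m | ∃ S : Finset (Fin n → Bool), S.card = k ∧ edgeBoundary n S = m}

/-- The half plane `{x : x_i = a}` of `Q_n`. -/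
def halfPlane (n : ℕ) (i : Fin n) (a : Bool) : Finset (Fin n → Bool) :=
  Finset.univ.filter (fun x => x i = a)

/-- `Type(S) = min_H |S ∩ H|`, minimum over the `2n` half planes of `Q_n`. -/
noncomputable def typeOf (n : ℕ) (S : Finset (Fin n → Bool)) : ℕ :=
  sInf {m | ∃ (i : Fin n) (a : Bool), (S ∩ halfPlane n i a).card = m}

/-- `θ(n,k,t) = min {θ(n,S) : |S| = k, Type(S) = t}`. -/
noncomputable def thetaMinType (n k t : ℕ) : ℕ :=
  sInf {m | ∃ S : Finset (Fin n → Bool),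
    S.card = k ∧ typeOf n S = t ∧ edgeBoundary n S = m}

/-- Graph distance on the cycle `C_m` with vertices labelled by naturals. -/
def cycleDist (m a b : ℕ) : ℕ := min (Nat.dist a b) (m - Nat.dist a b)

/-- The wirelength of an embedding `η` of `Q_n` into the cycle `C_{2^n}`:
the sum of cycle distances over all (unordered) edges of `Q_n`.  (The sum over
ordered pairs counts every edge twice, whence the division by `2`.) -/
def wirelength (n : ℕ) (η : (Fin n → Bool) → ℕ) : ℕ :=
  ((Finset.univ.filter (fun p : (Fin n → Bool) × (Fin n → Bool) =>
    cubeEdge p.1 p.2)).sum (fun p => cycleDist (2^n) (η p.1) (η p.2))) / 2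

/-- The reflected Gray code embedding `ξ_n(x) = (y)_2 + 1`, where
`y_i = (x_1 + ⋯ + x_i) mod 2`. -/
def xi (n : ℕ) (x : Fin n → Bool) : ℕ :=
  (Finset.univ.sum (fun i : Fin n =>
    ((Finset.univ.filter (fun j : Fin n => j ≤ i ∧ x j = true)).card % 2)
      * 2 ^ (n - 1 - (i : ℕ)))) + 1

/-- `f(x) = 3/4 − (64/7)(x − 1/2)²`. -/
noncomputable def fGuu (x : ℝ) : ℝ := 3/4 - 64/7 * (x - 1/2)^2

/-- `takDelta i` is `Δ_{i+1}`: `Δ_1(x) = 1/2 − |x − 1/2|`,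
`Δ_{n}(x) = (1/2)Δ_{n−1}(2x − ⌊2x⌋)`. -/
noncomputable def takDelta : ℕ → ℝ → ℝ
  | 0, x => 1/2 - |x - 1/2|
  | n+1, x => takDelta n (2*x - (⌊2*x⌋ : ℝ)) / 2

/-- `m_n(x) = Σ_{i=1}^n Δ_i(x)`, the n-th partial sum of the Takagi function. -/
noncomputable def mTakagi (n : ℕ) (x : ℝ) : ℝ := ∑ i ∈ Finset.range n, takDelta i x

/-- `y_N = ⌈2^N/24⌉ / 2^N`. -/
noncomputable def yGuu (N : ℕ) : ℝ := (⌈(2^N : ℝ)/24⌉ : ℝ) / 2^N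

/-- `p_N = 1/2 − y_N`. -/
noncomputable def pGuu (N : ℕ) : ℝ := 1/2 - yGuu N

/-- `g_{n,i,a}^{-1}(S)`, where `g_{n,i,a}` inserts the letter `a` at position `i`. -/
def gPre (n : ℕ) (i : Fin (n+1)) (a : Bool) (S : Finset (Fin (n+1) → Bool)) :
    Finset (Fin n → Bool) :=
  Finset.univ.filter (fun x => i.insertNth a x ∈ S)

/-!
Harper's edge-isoperimetric inequality is attained by initial segments of the binary order:
`θ(m,t) + 2 W(t) = m t` for `t ≤ 2^m`. Hence `θ(m+1,t) = θ(m,t) + t` for `t ≤ 2^m`, and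
`θ(m+1,2^m) = 2^m`.

Lower bound: if `|S| = 2^(n-1)` and some half plane meets `S` in `t` points, the two sections
`A`, `B` of `S` along that coordinate satisfy `|A| = t`, `|univ \ B| = t`, hence
`θ(S) = θ(A) + θ(B) + |A \ B| + |B \ A| ≥ 2 θ(n-1,t) + 2^(n-1) - 2t = 2 θ(n-2,t) + 2^(n-1)`.

Upper bound: for an optimal `t`-set `T` of `Q_(n-2)`, glue along a new first coordinate
`A = 0∅ ∪ 1T`, `B = 0(univ \ T) ∪ 1Q_(n-2)` and then `S = 0A ∪ 1B`. Now `A ⊆ B`, both have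
boundary `θ(T) + t`, and `B` alone meets every half plane of `Q_(n-1)` in at least `2^(n-3) ≥ t`
points, so the type of `S` is realised by the half plane `x_0 = 0`, which meets `S` in `A`.
-/

/-- `W t`, the number of edges of `Q_n` spanned by the first `t` vertices in binary order. -/
def binaryWeightSum (t : ℕ) : ℕ := ∑ i ∈ range t, (Nat.digits 2 i).sum

lemma digits_two_sum_two_mul (i : ℕ) : (Nat.digits 2 (2 * i)).sum = (Nat.digits 2 i).sum := by
  rcases Nat.eq_zero_or_pos i with rfl | hi
  · simp
  · simpa using congrArg List.sum (Nat.digits_add 2 one_lt_two 0 i two_pos (Or.inr hi.ne'))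

lemma digits_two_sum_two_mul_add_one (i : ℕ) :
    (Nat.digits 2 (2 * i + 1)).sum = (Nat.digits 2 i).sum + 1 := by
  rw [add_comm, Nat.digits_add 2 one_lt_two 1 i one_lt_two (Or.inl one_ne_zero), List.sum_cons,
    add_comm]

lemma binaryWeightSum_succ (t : ℕ) :
    binaryWeightSum (t + 1) = binaryWeightSum t + (Nat.digits 2 t).sum :=
  sum_range_succ _ _

lemma binaryWeightSum_two_mul (k : ℕ) : binaryWeightSum (2 * k) = 2 * binaryWeightSum k + k := by
  induction k with
  | zero => simp [binaryWeightSum]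
  | succ k ih =>
    rw [show 2 * (k + 1) = 2 * k + 1 + 1 by ring, binaryWeightSum_succ, binaryWeightSum_succ, ih,
      digits_two_sum_two_mul, digits_two_sum_two_mul_add_one, binaryWeightSum_succ]
    ring

lemma binaryWeightSum_two_mul_add_one (k : ℕ) :
    binaryWeightSum (2 * k + 1) = binaryWeightSum (k + 1) + binaryWeightSum k + k := by
  rw [binaryWeightSum_succ, binaryWeightSum_two_mul, digits_two_sum_two_mul, binaryWeightSum_succ]
  ring

lemma binaryWeightSum_eq_halves (t : ℕ) :
    binaryWeightSum t = binaryWeightSum ((t + 1) / 2) + binaryWeightSum (t / 2) + t / 2 := by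
  obtain ⟨k, rfl | rfl⟩ := Nat.even_or_odd' t
  · rw [binaryWeightSum_two_mul, show (2 * k + 1) / 2 = k by omega, show 2 * k / 2 = k by omega]
    ring
  · rw [binaryWeightSum_two_mul_add_one, show (2 * k + 1 + 1) / 2 = k + 1 by omega,
      show (2 * k + 1) / 2 = k by omega]

theorem binaryWeightSum_add_add_min_le (a b : ℕ) :
    binaryWeightSum a + binaryWeightSum b + min a b ≤ binaryWeightSum (a + b) := by
  induction hs : a + b using Nat.strong_induction_on generalizing a b with
  | _ s ih =>
  subst hs
  rcases Nat.eq_zero_or_pos a with rfl | ha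
  · simp [binaryWeightSum]
  rcases Nat.eq_zero_or_pos b with rfl | hb
  · simp [binaryWeightSum]
  obtain ⟨x, rfl | rfl⟩ := Nat.even_or_odd' a <;> obtain ⟨y, rfl | rfl⟩ := Nat.even_or_odd' b
  · have h := ih (x + y) (by omega) x y rfl
    rw [← mul_add, binaryWeightSum_two_mul, binaryWeightSum_two_mul, binaryWeightSum_two_mul]
    omega
  · have h₁ := ih (x + y) (by omega) x y rfl
    have h₂ := ih (x + y + 1) (by omega) x (y + 1) (by ring)
    rw [show 2 * x + (2 * y + 1) = 2 * (x + y) + 1 by ring, binaryWeightSum_two_mul_add_one,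
      binaryWeightSum_two_mul, binaryWeightSum_two_mul_add_one]
    omega
  · have h₁ := ih (x + y) (by omega) x y rfl
    have h₂ := ih (x + y + 1) (by omega) (x + 1) y (by ring)
    rw [show 2 * x + 1 + 2 * y = 2 * (x + y) + 1 by ring, binaryWeightSum_two_mul_add_one,
      binaryWeightSum_two_mul, binaryWeightSum_two_mul_add_one]
    omega
  · have h₁ := ih (x + y + 1) (by omega) (x + 1) y (by ring)
    have h₂ := ih (x + y + 1) (by omega) x (y + 1) (by ring)
    rw [show 2 * x + 1 + (2 * y + 1) = 2 * (x + y + 1) by ring, binaryWeightSum_two_mul,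
      binaryWeightSum_two_mul_add_one, binaryWeightSum_two_mul_add_one]
    omega

section Cube

variable {n : ℕ}

lemma cubeEdge_comm (u v : Fin n → Bool) : cubeEdge u v ↔ cubeEdge v u := by
  simp only [cubeEdge, ne_comm]

lemma cubeEdge_insertNth (i : Fin (n + 1)) (a b : Bool) (x y : Fin n → Bool) :
    cubeEdge (i.insertNth a x) (i.insertNth b y) ↔ (a = b ∧ cubeEdge x y) ∨ (a ≠ b ∧ x = y) := by
  unfold cubeEdge
  rw [card_filter, Fin.sum_univ_succAbove _ i]
  simp only [Fin.insertNth_apply_same, Fin.insertNth_apply_succAbove, ← card_filter]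
  by_cases hab : a = b
  · simp [hab]
  · simp [hab, filter_eq_empty_iff, funext_iff]

lemma sum_cube_insertNth {M : Type*} [AddCommMonoid M] (i : Fin (n + 1)) (a : Bool)
    (f : (Fin (n + 1) → Bool) → M) :
    ∑ y, f y = ∑ x, f (i.insertNth a x) + ∑ x, f (i.insertNth (!a) x) := by
  rw [← (Fin.insertNthEquiv (fun _ => Bool) i).sum_comp, Fintype.sum_prod_type, Fintype.sum_bool]
  cases a
  · exact add_comm _ _
  · rfl

@[simp]
lemma mem_gPre {i : Fin (n + 1)} {a : Bool} {S : Finset (Fin (n + 1) → Bool)} {x : Fin n → Bool} :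
    x ∈ gPre n i a S ↔ i.insertNth a x ∈ S := by
  simp [gPre]

lemma card_eq_card_gPre_add (i : Fin (n + 1)) (a : Bool) (S : Finset (Fin (n + 1) → Bool)) :
    S.card = (gPre n i a S).card + (gPre n i (!a) S).card := by
  conv_lhs => rw [← filter_univ_mem S]
  rw [card_filter, sum_cube_insertNth i a, gPre, gPre, card_filter, card_filter]

lemma edgeBoundary_eq_sum (S : Finset (Fin n → Bool)) :
    edgeBoundary n S = ∑ u, ∑ v, if u ∈ S ∧ v ∉ S ∧ cubeEdge u v then 1 else 0 := by
  rw [edgeBoundary, card_filter, Fintype.sum_prod_type]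

lemma sum_card_filter_mem_and_notMem_and_eq {α : Type*} [Fintype α] [DecidableEq α]
    (s t : Finset α) : ∑ x, #{y | x ∈ s ∧ y ∉ t ∧ x = y} = #(s \ t) := by
  rw [← filter_univ_mem (s \ t), card_filter]
  refine Fintype.sum_congr _ _ fun x => ?_
  rw [card_filter, Fintype.sum_eq_single x fun y hy => by simp [Ne.symm hy]]
  simp

lemma edgeBoundary_split (i : Fin (n + 1)) (a : Bool) (S : Finset (Fin (n + 1) → Bool)) :
    edgeBoundary (n + 1) S = edgeBoundary n (gPre n i a S) + edgeBoundary n (gPre n i (!a) S)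
      + (gPre n i a S \ gPre n i (!a) S).card + (gPre n i (!a) S \ gPre n i a S).card := by
  simp only [edgeBoundary_eq_sum, sum_cube_insertNth i a, Finset.sum_add_distrib,
    cubeEdge_insertNth, ← mem_gPre]
  simp only [ne_eq, Bool.eq_not_self, Bool.not_eq_eq_eq_not, not_true_eq_false, not_false_eq_true,
    true_and, false_and, or_false, false_or, sum_boole, Nat.cast_id,
    sum_card_filter_mem_and_notMem_and_eq]
  ring

lemma card_gPre (i : Fin (n + 1)) (a : Bool) (S : Finset (Fin (n + 1) → Bool)) :
    (gPre n i a S).card = (S ∩ halfPlane (n + 1) i a).card := by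
  refine card_nbij' (Fin.insertNth (α := fun _ => Bool) i a) i.removeNth (fun x hx => ?_)
    (fun y hy => ?_) (fun x _ => by simp) (fun y hy => ?_)
  · simpa [halfPlane] using hx
  · obtain ⟨hyS, rfl⟩ : y ∈ S ∧ y i = a := by simpa [halfPlane] using hy
    simpa using hyS
  · obtain ⟨-, rfl⟩ : y ∈ S ∧ y i = a := by simpa [halfPlane] using hy
    simp

lemma card_univ_cube : (univ : Finset (Fin n → Bool)).card = 2 ^ n := by
  simp

lemma card_univ_sdiff_cube (S : Finset (Fin n → Bool)) : (univ \ S).card = 2 ^ n - S.card := by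
  rw [card_univ_sdiff, ← card_univ, card_univ_cube]

lemma card_halfPlane (i : Fin (n + 1)) (a : Bool) : (halfPlane (n + 1) i a).card = 2 ^ n := by
  have : gPre n i a univ = univ := by ext; simp [gPre]
  simpa [this] using (card_gPre i a univ).symm

lemma edgeBoundary_compl (S : Finset (Fin n → Bool)) :
    edgeBoundary n (univ \ S) = edgeBoundary n S := by
  refine card_nbij' Prod.swap Prod.swap (fun p hp => ?_) (fun p hp => ?_) (fun _ _ => rfl)
    (fun _ _ => rfl) <;>
  simpa [cubeEdge_comm p.1, and_comm, and_left_comm] using hp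

lemma edgeBoundary_union_add_inter_le (A B : Finset (Fin n → Bool)) :
    edgeBoundary n (A ∪ B) + edgeBoundary n (A ∩ B) ≤ edgeBoundary n A + edgeBoundary n B := by
  simp only [edgeBoundary, card_filter, ← sum_add_distrib]
  refine sum_le_sum fun p _ => ?_
  by_cases hE : cubeEdge p.1 p.2 <;> by_cases h1 : p.1 ∈ A <;> by_cases h2 : p.1 ∈ B <;>
    by_cases h3 : p.2 ∈ A <;> by_cases h4 : p.2 ∈ B <;> simp [hE, h1, h2, h3, h4]

@[simp]
lemma edgeBoundary_empty : edgeBoundary n ∅ = 0 := by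
  simp [edgeBoundary]

@[simp]
lemma edgeBoundary_univ : edgeBoundary n univ = 0 := by
  simp [edgeBoundary]

end Cube

section Glue

variable {n : ℕ}

def glue (A B : Finset (Fin n → Bool)) : Finset (Fin (n + 1) → Bool) :=
  univ.filter fun x => Fin.tail x ∈ cond (x 0) B A

@[simp]
lemma mem_glue {A B : Finset (Fin n → Bool)} {x : Fin (n + 1) → Bool} :
    x ∈ glue A B ↔ Fin.tail x ∈ cond (x 0) B A := by
  simp [glue]

lemma gPre_zero_glue (a : Bool) (A B : Finset (Fin n → Bool)) :
    gPre n 0 a (glue A B) = cond a B A := by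
  ext x
  simp [gPre, glue, Fin.insertNth_zero']

lemma card_glue (A B : Finset (Fin n → Bool)) : (glue A B).card = A.card + B.card := by
  simpa [gPre_zero_glue] using card_eq_card_gPre_add 0 false (glue A B)

lemma edgeBoundary_glue (A B : Finset (Fin n → Bool)) :
    edgeBoundary (n + 1) (glue A B)
      = edgeBoundary n A + edgeBoundary n B + (A \ B).card + (B \ A).card := by
  simpa [gPre_zero_glue] using edgeBoundary_split 0 false (glue A B)

lemma glue_mono {A A' B B' : Finset (Fin n → Bool)} (hA : A ⊆ A') (hB : B ⊆ B') :
    glue A B ⊆ glue A' B' := by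
  intro x hx
  rw [mem_glue] at hx ⊢
  cases h : x 0 <;> simp only [h, cond_false, cond_true] at hx ⊢
  exacts [hA hx, hB hx]

lemma card_glue_inter_halfPlane_zero (A B : Finset (Fin n → Bool)) (a : Bool) :
    (glue A B ∩ halfPlane (n + 1) 0 a).card = (cond a B A).card := by
  rw [← card_gPre, gPre_zero_glue]

lemma glue_inter_halfPlane_succ (A B : Finset (Fin n → Bool)) (k : Fin n) (a : Bool) :
    glue A B ∩ halfPlane (n + 1) k.succ a = glue (A ∩ halfPlane n k a) (B ∩ halfPlane n k a) := by
  ext x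
  simp only [mem_inter, mem_glue, halfPlane, mem_filter, mem_univ, true_and]
  cases x 0 <;> simp [Fin.tail]

end Glue

/-- Harper's inequality. Replacing the two sections `F`, `T` of `S` by `F ∪ T`, `F ∩ T` does not
increase the boundary, and `W a + W b + min a b ≤ W (a + b)` then closes the induction. -/
theorem mul_card_le_edgeBoundary_add (n : ℕ) (S : Finset (Fin n → Bool)) :
    n * S.card ≤ edgeBoundary n S + 2 * binaryWeightSum S.card := by
  induction n with
  | zero => simp
  | succ n ih =>
    set F := gPre n 0 false S
    set T := gPre n 0 true S
    have hcard : S.card = (F ∪ T).card + (F ∩ T).card := by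
      rw [card_union_add_card_inter]; exact card_eq_card_gPre_add 0 false S
    have hsdiff : (F \ T).card + (T \ F).card + 2 * (F ∩ T).card = (F ∪ T).card + (F ∩ T).card := by
      have := card_sdiff_add_card_inter F T
      have := card_sdiff_add_card_inter T F
      rw [inter_comm T F] at this
      rw [card_union_add_card_inter]
      omega
    have hmin : min (F ∪ T).card (F ∩ T).card = (F ∩ T).card :=
      min_eq_right (card_le_card inter_subset_union)
    have hW := binaryWeightSum_add_add_min_le (F ∪ T).card (F ∩ T).card
    have hsub := edgeBoundary_union_add_inter_le F T
    have hU := ih (F ∪ T)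
    have hI := ih (F ∩ T)
    have hsplit : edgeBoundary (n + 1) S
        = edgeBoundary n F + edgeBoundary n T + (F \ T).card + (T \ F).card :=
      edgeBoundary_split 0 false S
    rw [hsplit, hcard, add_mul, mul_add, one_mul]
    rw [hmin] at hW
    omega

/-- The first `t` vertices of `Q_m` in binary order, coordinate `0` being the least significant
bit: `x ∈ binarySegment m t ↔ ∑ i, x_i 2^i < t`. -/
def binarySegment : (m : ℕ) → ℕ → Finset (Fin m → Bool)
  | 0, t => if t = 0 then ∅ else univ
  | m + 1, t => glue (binarySegment m ((t + 1) / 2)) (binarySegment m (t / 2))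

lemma binarySegment_mono {m t t' : ℕ} (h : t ≤ t') : binarySegment m t ⊆ binarySegment m t' := by
  induction m generalizing t t' with
  | zero =>
    simp only [binarySegment]
    split_ifs <;> first | omega | simp
  | succ m ih => exact glue_mono (ih (by omega)) (ih (by omega))

lemma card_binarySegment {m t : ℕ} (ht : t ≤ 2 ^ m) : (binarySegment m t).card = t := by
  induction m generalizing t with
  | zero =>
    obtain rfl | rfl : t = 0 ∨ t = 1 := by rw [pow_zero] at ht; omega
    all_goals simp [binarySegment]
  | succ m ih =>
    rw [binarySegment, card_glue, ih (by omega), ih (by omega)]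
    omega

lemma edgeBoundary_binarySegment {m t : ℕ} (ht : t ≤ 2 ^ m) :
    edgeBoundary m (binarySegment m t) + 2 * binaryWeightSum t = m * t := by
  induction m generalizing t with
  | zero =>
    obtain rfl | rfl : t = 0 ∨ t = 1 := by rw [pow_zero] at ht; omega
    · simp [binarySegment, binaryWeightSum]
    · simp only [binarySegment, one_ne_zero, if_false, edgeBoundary_univ]
      simp [binaryWeightSum]
  | succ m ih =>
    have hsub : binarySegment m (t / 2) ⊆ binarySegment m ((t + 1) / 2) :=
      binarySegment_mono (by omega)
    have hA := ih (t := (t + 1) / 2) (by omega)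
    have hB := ih (t := t / 2) (by omega)
    have hcardA := card_binarySegment (m := m) (t := (t + 1) / 2) (by omega)
    have hcardB := card_binarySegment (m := m) (t := t / 2) (by omega)
    have hsdiff := card_sdiff_add_card_eq_card hsub
    rw [binarySegment, edgeBoundary_glue, sdiff_eq_empty_iff_subset.mpr hsub, card_empty,
      binaryWeightSum_eq_halves t, add_mul, one_mul]
    have hmul : m * t = m * ((t + 1) / 2) + m * (t / 2) := by rw [← mul_add]; congr 1; omega
    omega

lemma thetaMin_le {n : ℕ} (S : Finset (Fin n → Bool)) : thetaMin n S.card ≤ edgeBoundary n S :=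
  Nat.sInf_le ⟨S, rfl, rfl⟩

lemma thetaMin_eq_edgeBoundary_binarySegment {m t : ℕ} (ht : t ≤ 2 ^ m) :
    thetaMin m t = edgeBoundary m (binarySegment m t) := by
  refine IsLeast.csInf_eq ⟨⟨_, card_binarySegment ht, rfl⟩, ?_⟩
  rintro _ ⟨S, rfl, rfl⟩
  have := mul_card_le_edgeBoundary_add m S
  have := edgeBoundary_binarySegment ht
  omega

theorem thetaMin_add_two_mul_binaryWeightSum {m t : ℕ} (ht : t ≤ 2 ^ m) :
    thetaMin m t + 2 * binaryWeightSum t = m * t := by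
  rw [thetaMin_eq_edgeBoundary_binarySegment ht, edgeBoundary_binarySegment ht]

lemma thetaMin_succ {m t : ℕ} (ht : t ≤ 2 ^ m) : thetaMin (m + 1) t = thetaMin m t + t := by
  have h₁ := thetaMin_add_two_mul_binaryWeightSum ht
  have h₂ := thetaMin_add_two_mul_binaryWeightSum (m := m + 1)
    (ht.trans (Nat.pow_le_pow_right two_pos m.le_succ))
  rw [add_mul, one_mul] at h₂
  omega

lemma thetaMin_succ_two_pow (m : ℕ) : thetaMin (m + 1) (2 ^ m) = 2 ^ m := by
  have h : thetaMin m (2 ^ m) = 0 := by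
    simpa using thetaMin_le (univ : Finset (Fin m → Bool))
  rw [thetaMin_succ le_rfl, h, zero_add]

lemma exists_card_inter_halfPlane_eq_typeOf {n : ℕ} (S : Finset (Fin (n + 1) → Bool)) :
    ∃ i a, (S ∩ halfPlane (n + 1) i a).card = typeOf (n + 1) S :=
  Nat.sInf_mem (s := {m | ∃ i a, (S ∩ halfPlane (n + 1) i a).card = m}) ⟨_, 0, false, rfl⟩

lemma typeOf_eq {n t : ℕ} {S : Finset (Fin n → Bool)} (i : Fin n) (a : Bool)
    (h : (S ∩ halfPlane n i a).card = t) (hle : ∀ j b, t ≤ (S ∩ halfPlane n j b).card) :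
    typeOf n S = t :=
  IsLeast.csInf_eq ⟨⟨i, a, h⟩, by rintro _ ⟨j, b, rfl⟩; exact hle j b⟩

theorem le_edgeBoundary_of_typeOf_eq {m t : ℕ} (ht : t ≤ 2 ^ m) (S : Finset (Fin (m + 3) → Bool))
    (hcard : S.card = 2 ^ (m + 2)) (htype : typeOf (m + 3) S = t) :
    2 * thetaMin (m + 1) t + 2 ^ (m + 2) ≤ edgeBoundary (m + 3) S := by
  obtain ⟨i, a, hia⟩ := exists_card_inter_halfPlane_eq_typeOf S
  set A := gPre (m + 2) i a S
  set B := gPre (m + 2) i (!a) S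
  have hpow : 2 ^ (m + 2) = 2 * 2 ^ (m + 1) ∧ 2 ^ (m + 1) = 2 * 2 ^ m := ⟨pow_succ' _ _, pow_succ' _ _⟩
  have htm : t ≤ 2 ^ (m + 1) := by omega
  have hA : A.card = t := by rw [card_gPre, hia, htype]
  have hAB : A.card + B.card = 2 ^ (m + 2) := hcard ▸ (card_eq_card_gPre_add i a S).symm
  have hBc : (univ \ B).card = t := by
    rw [card_univ_sdiff_cube]
    omega
  have hθA : thetaMin (m + 1) t + t ≤ edgeBoundary (m + 2) A := by
    rw [← thetaMin_succ htm, ← hA]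
    exact thetaMin_le A
  have hθB : thetaMin (m + 1) t + t ≤ edgeBoundary (m + 2) B := by
    rw [← thetaMin_succ htm, ← hBc, ← edgeBoundary_compl B]
    exact thetaMin_le _
  have hBA := le_card_sdiff A B
  have hsplit : edgeBoundary (m + 3) S
      = edgeBoundary (m + 2) A + edgeBoundary (m + 2) B + (A \ B).card + (B \ A).card :=
    edgeBoundary_split i a S
  omega

lemma two_pow_le_card_glue_compl_inter_halfPlane {m : ℕ} {T : Finset (Fin (m + 1) → Bool)}
    (hT : T.card ≤ 2 ^ m) (k : Fin (m + 2)) (b : Bool) :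
    2 ^ m ≤ (glue (univ \ T) univ ∩ halfPlane (m + 2) k b).card := by
  have hpow : 2 ^ (m + 1) = 2 * 2 ^ m := pow_succ' _ _
  cases k using Fin.cases with
  | zero =>
    rw [card_glue_inter_halfPlane_zero]
    cases b
    · rw [cond_false, card_univ_sdiff_cube]
      omega
    · rw [cond_true, card_univ_cube]
      omega
  | succ l =>
    rw [glue_inter_halfPlane_succ, card_glue, univ_inter, card_halfPlane]
    omega

theorem exists_typeOf_eq_edgeBoundary_eq {m t : ℕ} (ht : t ≤ 2 ^ m)
    (T : Finset (Fin (m + 1) → Bool)) (hT : T.card = t) :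
    ∃ S : Finset (Fin (m + 3) → Bool), S.card = 2 ^ (m + 2) ∧ typeOf (m + 3) S = t ∧
      edgeBoundary (m + 3) S = 2 * edgeBoundary (m + 1) T + 2 ^ (m + 2) := by
  set A : Finset (Fin (m + 2) → Bool) := glue ∅ T
  set B : Finset (Fin (m + 2) → Bool) := glue (univ \ T) univ
  have hpow : 2 ^ (m + 2) = 2 * 2 ^ (m + 1) ∧ 2 ^ (m + 1) = 2 * 2 ^ m := ⟨pow_succ' _ _, pow_succ' _ _⟩
  have hAB : A ⊆ B := glue_mono (empty_subset _) (subset_univ _)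
  have hA : A.card = t := by simp [A, card_glue, hT]
  have hB : B.card = 2 ^ (m + 2) - t := by
    rw [card_glue, card_univ_sdiff_cube, hT, card_univ_cube]
    omega
  have hθA : edgeBoundary (m + 2) A = edgeBoundary (m + 1) T + t := by
    simp [A, edgeBoundary_glue, hT]
  have hθB : edgeBoundary (m + 2) B = edgeBoundary (m + 1) T + t := by
    simp [B, edgeBoundary_glue, edgeBoundary_compl, hT]
  have hBtype : ∀ k b, 2 ^ m ≤ (B ∩ halfPlane (m + 2) k b).card :=
    two_pow_le_card_glue_compl_inter_halfPlane (hT ▸ ht)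
  refine ⟨glue A B, ?_, typeOf_eq 0 false ?_ fun i b => ?_, ?_⟩
  · rw [card_glue]; omega
  · rw [card_glue_inter_halfPlane_zero]; exact hA
  · cases i using Fin.cases with
    | zero =>
      rw [card_glue_inter_halfPlane_zero]
      cases b
      · exact hA.ge
      · rw [cond_true, hB]
        omega
    | succ k =>
      rw [glue_inter_halfPlane_succ, card_glue]
      have := hBtype k b
      omega
  · rw [edgeBoundary_glue, sdiff_eq_empty_iff_subset.mpr hAB, card_empty, hθA, hθB]
    have := card_sdiff_add_card_eq_card hAB
    omega

theorem thetaMinType_half_eq {m t : ℕ} (ht : t ≤ 2 ^ m) :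
    thetaMinType (m + 3) (2 ^ (m + 2)) t = 2 * thetaMin (m + 1) t + 2 ^ (m + 2) := by
  have htm : t ≤ 2 ^ (m + 1) := ht.trans (Nat.pow_le_pow_right two_pos m.le_succ)
  obtain ⟨S, hS, htype, hθS⟩ :=
    exists_typeOf_eq_edgeBoundary_eq ht (binarySegment (m + 1) t) (card_binarySegment htm)
  refine IsLeast.csInf_eq ⟨⟨S, hS, htype, ?_⟩, ?_⟩
  · rw [hθS, thetaMin_eq_edgeBoundary_binarySegment htm]
  · rintro _ ⟨S', hS', htype', rfl⟩
    exact le_edgeBoundary_of_typeOf_eq ht S' hS' htype'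

/-- For `n ≥ 3` and `0 ≤ t ≤ 2^{n−3}`,
`θ(n, 2^{n−1}, t) = 2θ(n−2,t) + 2^{n−1}`; in particular
`θ(n, 2^{n−1}, 2^{n−3}) = (3/4)·2^n`. -/
theorem thetaMinType_half_small_type (n : ℕ) (hn : 3 ≤ n) :
    (∀ t : ℕ, t ≤ 2^(n-3) →
      thetaMinType n (2^(n-1)) t = 2 * thetaMin (n-2) t + 2^(n-1)) ∧
    (thetaMinType n (2^(n-1)) (2^(n-3)) : ℝ) = (3/4) * 2^n := by
  obtain ⟨m, rfl⟩ : ∃ m, n = m + 3 := ⟨n - 3, by omega⟩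
  simp only [show m + 3 - 1 = m + 2 from rfl, show m + 3 - 2 = m + 1 from rfl, Nat.add_sub_cancel]
  refine ⟨fun t ht => thetaMinType_half_eq ht, ?_⟩
  rw [thetaMinType_half_eq le_rfl, thetaMin_succ_two_pow]
  push_cast
  ring
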